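/- arXiv:0905.2040 — 2 statements merged into one kernel-verified Lean document; each statement's English description precedes it below -/
import Mathlib

section
/- In a loop satisfying x^{ρρ} = xx·x^ρ and x^{λλ} = x^λ·xx for all x, the loop is a LSIPL (x^λ·xx = x) if and only if it is a RSIPL (xx·x^ρ = x). -/
/-- A loop: a set with multiplication, left division `ld`, right division `rd`
and a two-sided identity `e`. -/
structure LoopStr (Q : Type*) where
  mul : Q → Q → Q
  ld : Q → Q → Q
  rd : Q → Q → Q
  e : Q
  mul_ld : ∀ x y, mul x (ld x y) = y
  rd_mul : ∀ x y, mul (rd y x) x = y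
  ld_mul : ∀ x y, ld x (mul x y) = y
  mul_rd : ∀ x y, rd (mul y x) x = y
  one_mul : ∀ x, mul e x = x
  mul_one : ∀ x, mul x e = x

namespace LoopStr

variable {Q : Type*} (L : LoopStr Q)

/-- The left inverse `x^λ` of `x`, i.e. the unique element with `x^λ · x = e`. -/
def lam (x : Q) : Q := L.rd L.e x

/-- The right inverse `x^ρ` of `x`, i.e. the unique element with `x · x^ρ = e`. -/
def rho (x : Q) : Q := L.ld x L.e

/-- A binary operation `op` with identity `e'` is Osborn if, whenever `xl` is a
left inverse of `x` w.r.t. `op`, the Osborn identity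
`x(yz·x) = (x(y·x^λ·x))·(zx)` holds. -/
def IsOsbornOp (op : Q → Q → Q) (e' : Q) : Prop :=
  ∀ x y z xl, op xl x = e' →
    op x (op (op y z) x) = op (op x (op (op y xl) x)) (op z x)

/-- The `u,v`-principal isotope: `x ∗ y = (x/v)·(u\y)`; its identity is `u·v`. -/
def isotope (u v : Q) : Q → Q → Q := fun x y => L.mul (L.rd x v) (L.ld u y)

/-- `Q` is a universal Osborn loop: every `u,v`-principal isotope is Osborn. -/
def Universal : Prop := ∀ u v, IsOsbornOp (L.isotope u v) (L.mul u v)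

/-- `Q` is a left universal Osborn loop: every left principal isotope
`x ∗ y = (x/v)·y` (identity `v`) is Osborn. -/
def LeftUniversal : Prop := ∀ v, IsOsbornOp (fun x y => L.mul (L.rd x v) y) v

/-- `Q` is a right universal Osborn loop: every right principal isotope
`x ∗ y = x·(u\y)` (identity `u`) is Osborn. -/
def RightUniversal : Prop := ∀ u, IsOsbornOp (fun x y => L.mul x (L.ld u y)) u

end LoopStr

/-! In any loop `(x^λ)^ρ = x` and `(x^ρ)^λ = x`. So if `λ` is an involution then
`x^ρ = ((x^λ)^λ)^ρ = x^λ`, hence `ρ = λ` is an involution too, and conversely.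
The hypotheses turn LSIP into `x^{λλ} = x` and RSIP into `x^{ρρ} = x`. -/

namespace LoopStr

variable {Q : Type*} (L : LoopStr Q)

theorem lam_mul_self (x : Q) : L.mul (L.lam x) x = L.e := L.rd_mul x L.e

theorem mul_rho_self (x : Q) : L.mul x (L.rho x) = L.e := L.mul_ld x L.e

theorem rho_lam (x : Q) : L.rho (L.lam x) = x :=
  (congrArg (L.ld (L.lam x)) (L.lam_mul_self x)).symm.trans (L.ld_mul _ _)

theorem lam_rho (x : Q) : L.lam (L.rho x) = x :=
  (congrArg (L.rd · (L.rho x)) (L.mul_rho_self x)).symm.trans (L.mul_rd _ _)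

variable {L}

theorem rho_eq_lam_of_lam_lam (h : ∀ y, L.lam (L.lam y) = y) (x : Q) : L.rho x = L.lam x := by
  simpa only [h] using L.rho_lam (L.lam x)

theorem lam_eq_rho_of_rho_rho (h : ∀ y, L.rho (L.rho y) = y) (x : Q) : L.lam x = L.rho x := by
  simpa only [h] using L.lam_rho (L.rho x)

theorem rho_rho_of_lam_lam (h : ∀ y, L.lam (L.lam y) = y) (x : Q) : L.rho (L.rho x) = x := by
  rw [rho_eq_lam_of_lam_lam h x, rho_lam]

theorem lam_lam_of_rho_rho (h : ∀ y, L.rho (L.rho y) = y) (x : Q) : L.lam (L.lam x) = x := by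
  rw [lam_eq_rho_of_rho_rho h x, lam_rho]

end LoopStr

open LoopStr

theorem lsip_iff_rsip {Q : Type*} (L : LoopStr Q)
    (hrho : ∀ x, L.rho (L.rho x) = L.mul (L.mul x x) (L.rho x))
    (hlam : ∀ x, L.lam (L.lam x) = L.mul (L.lam x) (L.mul x x)) :
    (∀ x, L.mul (L.lam x) (L.mul x x) = x) ↔
      (∀ x, L.mul (L.mul x x) (L.rho x) = x) := by
  constructor
  · intro hL x
    rw [← hrho]
    exact rho_rho_of_lam_lam (fun y => (hlam y).trans (hL y)) x
  · intro hR x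
    rw [← hlam]
    exact lam_lam_of_rho_rho (fun y => (hrho y).trans (hR y)) x
end

section
/- A right universal Osborn loop satisfies u^ρ·u = u·u^λ for all u if and only if it satisfies u·(u^λ·u^ρ) = u^ρ for all u. -/
/-!
Both conditions say that `u \ (u^ρ·u) = u^λ`: the first by left division, the second because
of the identity `u·((u \ (u^ρ·u))·u^ρ) = u^ρ`. That identity already holds in every Osborn
loop (a right universal one is Osborn, being its own right principal isotope at `e`): the
Osborn identity at `x = u^ρ`, `x^λ = u`, `y = u` collapses to `u^ρ·((u·z)·u^ρ) = z·u^ρ`, and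
evaluating this at `z = u \ u^ρ` and at `z = u \ (u^ρ·u)` leaves two expressions for the same
element, which the Osborn identity at `y = u^ρ`, `z = e` identifies.
-/

namespace LoopStr

variable {Q : Type*} (L : LoopStr Q)

def IsOsborn : Prop := IsOsbornOp L.mul L.e

local infixl:70 " ⬝ " => L.mul

theorem mul_left_cancel_iff {x y z : Q} : x ⬝ y = x ⬝ z ↔ y = z :=
  ⟨fun h => by rw [← L.ld_mul x y, h, L.ld_mul], congrArg _⟩

theorem mul_right_cancel_iff {x y z : Q} : y ⬝ x = z ⬝ x ↔ y = z :=
  ⟨fun h => by rw [← L.mul_rd x y, h, L.mul_rd], congrArg (L.mul · x)⟩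

theorem ld_eq_iff {x y z : Q} : L.ld x y = z ↔ x ⬝ z = y := by
  rw [← L.mul_left_cancel_iff (x := x), L.mul_ld]
  exact eq_comm

theorem ld_e (y : Q) : L.ld L.e y = y := by
  rw [ld_eq_iff, L.one_mul]

theorem mul_rho (x : Q) : x ⬝ L.rho x = L.e := L.mul_ld x L.e

theorem RightUniversal.isOsborn {L : LoopStr Q} (h : L.RightUniversal) : L.IsOsborn := by
  simpa only [IsOsborn, ld_e] using h L.e

namespace IsOsborn

variable {L}

theorem rho_mul_mul_mul_rho (hO : L.IsOsborn) (u z : Q) :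
    L.rho u ⬝ (u ⬝ z ⬝ L.rho u) = z ⬝ L.rho u := by
  have hρ : L.rho u ⬝ (u ⬝ u ⬝ L.rho u) = L.e := by
    have h := hO (L.rho u) u (L.rho u) u (L.mul_rho u)
    rw [L.mul_rho, L.one_mul] at h
    exact L.mul_right_cancel_iff.mp (h.symm.trans (L.one_mul _).symm)
  rw [hO (L.rho u) u z u (L.mul_rho u), hρ, L.one_mul]

theorem rho_mul_mul_rho_mul_mul_rho (hO : L.IsOsborn) (u : Q) :
    L.rho u ⬝ (L.rho u ⬝ u ⬝ L.rho u) = L.ld u (L.rho u) := by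
  have h := hO (L.rho u) (L.rho u) L.e u (L.mul_rho u)
  have hz := hO.rho_mul_mul_mul_rho u (L.ld u (L.rho u))
  rw [L.mul_one, L.one_mul] at h
  rw [L.mul_ld] at hz
  exact L.mul_right_cancel_iff.mp (h.symm.trans hz)

theorem mul_ld_rho_mul_mul_rho (hO : L.IsOsborn) (u : Q) :
    u ⬝ (L.ld u (L.rho u ⬝ u) ⬝ L.rho u) = L.rho u := by
  rw [← L.ld_eq_iff, ← hO.rho_mul_mul_rho_mul_mul_rho]
  conv_lhs => rw [← L.mul_ld u (L.rho u ⬝ u)]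
  rw [hO.rho_mul_mul_mul_rho]

end IsOsborn

end LoopStr

open LoopStr

theorem right_universal_osborn_comm_iff {Q : Type*} (L : LoopStr Q)
    (h : L.RightUniversal) :
    (∀ u, L.mul (L.rho u) u = L.mul u (L.lam u)) ↔
      (∀ u, L.mul u (L.mul (L.lam u) (L.rho u)) = L.rho u) := by
  refine forall_congr' fun u => ?_
  have key := h.isOsborn.mul_ld_rho_mul_mul_rho u
  calc L.mul (L.rho u) u = L.mul u (L.lam u)
      ↔ L.ld u (L.mul (L.rho u) u) = L.lam u := eq_comm.trans L.ld_eq_iff.symm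
    _ ↔ L.mul (L.lam u) (L.rho u) = L.mul (L.ld u (L.mul (L.rho u) u)) (L.rho u) := by
      rw [L.mul_right_cancel_iff, eq_comm]
    _ ↔ L.mul u (L.mul (L.lam u) (L.rho u)) = L.rho u := by
      rw [← L.mul_left_cancel_iff (x := u), key]
end
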